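/- arXiv:1012.3873 — 5 statements merged into one kernel-verified Lean document; each statement's English description precedes it below -/
import Mathlib

section
/- Let α ∈ (0,1) and set c_{2α} := ∫_ℝ |e^{iξ} − 1|² |ξ|^{−1−2α} dξ. Then for all real s, t, the integral ∫_ℝ (e^{isξ} − 1)·conj(e^{itξ} − 1)·|ξ|^{−1−2α} dξ is (absolutely convergent and) real, and equals c_{2α} · ½ (|s|^{2α} + |t|^{2α} − |t − s|^{2α}). -/
/-!
Write `w(ξ) = |ξ|^{-1-2α}` and `e(x) = e^{ix} - 1`. Since `conj (e(x)) = e(-x)` and `w` is even,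
the integrand `F(ξ) = e(sξ) conj(e(tξ)) w(ξ)` satisfies `conj (F ξ) = F (-ξ)`, so its integral is
real and equals `∫ Re F`. Polarization gives
`2 Re F = (|e(sξ)|² + |e(tξ)|² - |e(sξ) - e(tξ)|²) w` with `|e(sξ) - e(tξ)| = |e((s-t)ξ)|`, and the
substitution `ξ ↦ uξ` shows `∫ |e(uξ)|² w = |u|^{2α} c_{2α}`. Integrability comes from
`|e(x)|² ≤ min(x², 4)`, which makes `|e(uξ)|² w(ξ)` integrable near `0` and near `∞`.
-/

open MeasureTheory Complex ComplexConjugate Set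

lemma re_mul_conj_eq (z w : ℂ) : (z * conj w).re = (‖z‖ ^ 2 + ‖w‖ ^ 2 - ‖z - w‖ ^ 2) / 2 := by
  rw [← normSq_eq_norm_sq, ← normSq_eq_norm_sq, ← normSq_eq_norm_sq, normSq_sub]
  ring

lemma integral_ofReal_re_eq_of_conj_eq_comp_neg {f : ℝ → ℂ} (hf : ∀ x, conj (f x) = f (-x)) :
    (((∫ x, f x).re : ℝ) : ℂ) = ∫ x, f x := by
  rw [← conj_eq_iff_re, ← integral_conj]
  simp_rw [hf]
  exact integral_neg_eq_self f volume

lemma integrable_mul_conj_mul_of_norm_sq {X : Type*} [MeasurableSpace X] {μ : Measure X}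
    {f g : X → ℂ} {w : X → ℝ} (hf : AEStronglyMeasurable f μ) (hg : AEStronglyMeasurable g μ)
    (hw : AEStronglyMeasurable w μ) (hw₀ : 0 ≤ᵐ[μ] w)
    (hf₂ : Integrable (fun x => ‖f x‖ ^ 2 * w x) μ)
    (hg₂ : Integrable (fun x => ‖g x‖ ^ 2 * w x) μ) :
    Integrable (fun x => f x * conj (g x) * w x) μ := by
  refine ((hf₂.add hg₂).div_const 2).mono'
    ((hf.mul hg.star).mul (continuous_ofReal.comp_aestronglyMeasurable hw)) ?_
  filter_upwards [hw₀] with x hx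
  rw [norm_mul, norm_mul, RCLike.norm_conj, norm_real, Real.norm_of_nonneg hx]
  have h := two_mul_le_add_sq ‖f x‖ ‖g x‖
  calc ‖f x‖ * ‖g x‖ * w x ≤ (‖f x‖ ^ 2 + ‖g x‖ ^ 2) / 2 * w x := by gcongr; linarith
    _ = (‖f x‖ ^ 2 * w x + ‖g x‖ ^ 2 * w x) / 2 := by ring

lemma integral_comp_mul_left_mul_abs_rpow {g : ℝ → ℝ} (hg : g 0 = 0) {p : ℝ} (hp : p ≠ -1)
    (u : ℝ) : ∫ ξ, g (u * ξ) * |ξ| ^ p = |u| ^ (-1 - p) * ∫ ξ, g ξ * |ξ| ^ p := by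
  rcases eq_or_ne u 0 with rfl | hu
  · simp [hg, Real.zero_rpow (sub_ne_zero.2 (Ne.symm hp) : -1 - p ≠ 0)]
  have hu' : 0 < |u| := abs_pos.2 hu
  have key : ∀ ξ, g (u * ξ) * |ξ| ^ p = |u| ^ (-p) * (g (u * ξ) * |u * ξ| ^ p) := by
    intro ξ
    rw [abs_mul, Real.mul_rpow hu'.le (abs_nonneg ξ), Real.rpow_neg hu'.le]
    field_simp
  simp_rw [key]
  rw [integral_const_mul, Measure.integral_comp_mul_left (fun x => g x * |x| ^ p), smul_eq_mul,
    ← mul_assoc, abs_inv, ← Real.rpow_neg_one, ← Real.rpow_add hu']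
  ring_nf

lemma integrable_min_sq_one_mul_abs_rpow {p : ℝ} (hp₁ : -3 < p) (hp₂ : p < -1) :
    Integrable fun ξ : ℝ => min (ξ ^ 2) 1 * |ξ| ^ p := by
  have h := integrable_fun_norm_addHaar (volume : Measure ℝ) (f := fun y => min (y ^ 2) 1 * y ^ p)
  simp only [Real.norm_eq_abs, sq_abs, Module.finrank_self, tsub_self, pow_zero, one_smul] at h
  rw [h, ← Ioc_union_Ioi_eq_Ioi zero_le_one, integrableOn_union]
  constructor
  · have hint := (intervalIntegrable_iff_integrableOn_Ioc_of_le zero_le_one).1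
      (intervalIntegral.intervalIntegrable_rpow' (a := 0) (b := 1) (r := p + 2) (by linarith))
    refine hint.mono' (by fun_prop) ?_
    filter_upwards [ae_restrict_mem measurableSet_Ioc] with ξ ⟨hξ₀, _⟩
    rw [Real.norm_of_nonneg (by positivity), Real.rpow_add hξ₀, Real.rpow_two, mul_comm]
    gcongr
    exact min_le_left _ _
  · refine (integrableOn_Ioi_rpow_of_lt hp₂ zero_lt_one).mono' (by fun_prop) ?_
    filter_upwards [ae_restrict_mem measurableSet_Ioi] with ξ (hξ : 1 < ξ)
    rw [Real.norm_of_nonneg (by positivity)]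
    calc min (ξ ^ 2) 1 * ξ ^ p ≤ 1 * ξ ^ p := by gcongr; exact min_le_right _ _
      _ = ξ ^ p := one_mul _

lemma norm_exp_I_mul_sub_one_le_two (x : ℝ) : ‖exp (I * x) - 1‖ ≤ 2 := by
  rw [norm_exp_I_mul_ofReal_sub_one, norm_mul, Real.norm_eq_abs, Real.norm_eq_abs, abs_two]
  nlinarith [Real.abs_sin_le_one (x / 2)]

lemma norm_exp_I_mul_sub_one_sq_le (u ξ : ℝ) :
    ‖exp (I * ↑(u * ξ)) - 1‖ ^ 2 ≤ max (u ^ 2) 4 * min (ξ ^ 2) 1 := by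
  rcases le_total (ξ ^ 2) 1 with h | h
  · rw [min_eq_left h]
    calc ‖exp (I * ↑(u * ξ)) - 1‖ ^ 2 ≤ ‖u * ξ‖ ^ 2 := by
          gcongr; exact Real.norm_exp_I_mul_ofReal_sub_one_le
      _ = u ^ 2 * ξ ^ 2 := by
          rw [norm_mul, mul_pow, Real.norm_eq_abs, Real.norm_eq_abs, sq_abs, sq_abs]
      _ ≤ max (u ^ 2) 4 * ξ ^ 2 := by gcongr; exact le_max_left _ _
  · rw [min_eq_right h, mul_one]
    calc ‖exp (I * ↑(u * ξ)) - 1‖ ^ 2 ≤ 2 ^ 2 := by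
          gcongr; exact norm_exp_I_mul_sub_one_le_two _
      _ ≤ max (u ^ 2) 4 := by norm_num

lemma integrable_norm_exp_I_mul_sub_one_sq_mul_abs_rpow {p : ℝ} (hp₁ : -3 < p) (hp₂ : p < -1)
    (u : ℝ) : Integrable fun ξ : ℝ => ‖exp (I * ↑(u * ξ)) - 1‖ ^ 2 * |ξ| ^ p := by
  refine ((integrable_min_sq_one_mul_abs_rpow hp₁ hp₂).const_mul (max (u ^ 2) 4)).mono'
    (by fun_prop) (ae_of_all _ fun ξ => ?_)
  rw [Real.norm_of_nonneg (by positivity), ← mul_assoc]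
  gcongr
  exact norm_exp_I_mul_sub_one_sq_le u ξ

lemma integral_norm_exp_I_mul_sub_one_sq_mul_abs_rpow {p : ℝ} (hp : p ≠ -1) (u : ℝ) :
    ∫ ξ : ℝ, ‖exp (I * ↑(u * ξ)) - 1‖ ^ 2 * |ξ| ^ p
      = |u| ^ (-1 - p) * ∫ ξ : ℝ, ‖exp (I * ξ) - 1‖ ^ 2 * |ξ| ^ p :=
  integral_comp_mul_left_mul_abs_rpow (g := fun x => ‖exp (I * x) - 1‖ ^ 2) (by simp) hp u

lemma norm_exp_I_mul_sub_exp_I_mul (a b : ℝ) :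
    ‖(exp (I * a) - 1) - (exp (I * b) - 1)‖ = ‖exp (I * ↑(a - b)) - 1‖ := by
  have : exp (I * a) - 1 - (exp (I * b) - 1) = exp (I * b) * (exp (I * ↑(a - b)) - 1) := by
    rw [mul_sub, ← exp_add]; push_cast; ring_nf
  rw [this, norm_mul, mul_comm I, norm_exp_ofReal_mul_I, one_mul]

lemma conj_exp_I_mul_sub_one (x : ℝ) : conj (exp (I * x) - 1) = exp (I * ↑(-x)) - 1 := by
  rw [map_sub, map_one, ← exp_conj, map_mul, conj_I, conj_ofReal]
  push_cast; ring_nf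

/-- The harmonizable representation of fBm has the fBm covariance kernel:
for `α ∈ (0,1)` and `c_{2α} := ∫ |e^{iξ} − 1|² |ξ|^{−1−2α} dξ`, the integral
`∫ (e^{isξ} − 1) conj(e^{itξ} − 1) |ξ|^{−1−2α} dξ` is absolutely convergent, real,
and equals `c_{2α} · ½(|s|^{2α} + |t|^{2α} − |t−s|^{2α})`. -/
theorem fbm_covariance (α : ℝ) (hα : α ∈ Set.Ioo (0:ℝ) 1) (s t : ℝ) :
    Integrable (fun ξ : ℝ => (Complex.exp (Complex.I * (s : ℂ) * (ξ : ℂ)) - 1) *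
        (starRingEnd ℂ) (Complex.exp (Complex.I * (t : ℂ) * (ξ : ℂ)) - 1) *
        ((|ξ| ^ (-1 - 2 * α) : ℝ) : ℂ)) ∧
    ∫ ξ : ℝ, (Complex.exp (Complex.I * (s : ℂ) * (ξ : ℂ)) - 1) *
        (starRingEnd ℂ) (Complex.exp (Complex.I * (t : ℂ) * (ξ : ℂ)) - 1) *
        ((|ξ| ^ (-1 - 2 * α) : ℝ) : ℂ)
      = (((∫ ξ : ℝ, ‖Complex.exp (Complex.I * (ξ : ℂ)) - 1‖ ^ 2 * |ξ| ^ (-1 - 2 * α)) *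
          ((|s| ^ (2 * α) + |t| ^ (2 * α) - |t - s| ^ (2 * α)) / 2) : ℝ) : ℂ) := by
  obtain ⟨hα₀, hα₁⟩ := hα
  have hp₁ : -3 < -1 - 2 * α := by linarith
  have hp₂ : -1 - 2 * α < -1 := by linarith
  have hexp : -1 - (-1 - 2 * α) = 2 * α := by ring
  set G : ℝ → ℝ → ℝ := fun u ξ => ‖exp (I * ↑(u * ξ)) - 1‖ ^ 2 * |ξ| ^ (-1 - 2 * α)
  set F : ℝ → ℂ := fun ξ =>
    (exp (I * ↑(s * ξ)) - 1) * conj (exp (I * ↑(t * ξ)) - 1) * ↑(|ξ| ^ (-1 - 2 * α))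
  have hF : (fun ξ : ℝ => (exp (I * s * ξ) - 1) * conj (exp (I * t * ξ) - 1) *
      ↑(|ξ| ^ (-1 - 2 * α))) = F := by
    ext ξ; simp only [F, ofReal_mul, ← mul_assoc]
  have hG : ∀ u, Integrable (G u) := integrable_norm_exp_I_mul_sub_one_sq_mul_abs_rpow hp₁ hp₂
  have hint : Integrable F :=
    integrable_mul_conj_mul_of_norm_sq (by fun_prop) (by fun_prop)
      (measurable_abs.pow_const _).aestronglyMeasurable
      (ae_of_all _ fun ξ => by positivity) (hG s) (hG t)
  have hconj : ∀ ξ, conj (F ξ) = F (-ξ) := fun ξ => by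
    simp only [F, map_mul, conj_exp_I_mul_sub_one, conj_ofReal, abs_neg, mul_neg]
  have hre : ∀ ξ, (F ξ).re = (G s ξ + G t ξ - G (s - t) ξ) / 2 := fun ξ => by
    simp only [F, G, re_mul_ofReal, re_mul_conj_eq, norm_exp_I_mul_sub_exp_I_mul,
      show (s - t) * ξ = s * ξ - t * ξ by ring]
    ring
  refine ⟨hF ▸ hint, ?_⟩
  rw [hF, ← integral_ofReal_re_eq_of_conj_eq_comp_neg hconj, ← RCLike.re_to_complex,
    ← integral_re hint]
  simp only [RCLike.re_to_complex, hre]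
  rw [integral_div, integral_sub (f := fun ξ => G s ξ + G t ξ) ((hG s).add (hG t)) (hG _),
    integral_add (hG s) (hG t)]
  simp only [G, integral_norm_exp_I_mul_sub_one_sq_mul_abs_rpow hp₂.ne, hexp, abs_sub_comm s t]
  congr 1
  ring
end

section
/- Let Γ : ℝ → ℝ^d be continuously differentiable, n ≥ 1, and i₁,…,iₙ ∈ {1,…,d}. Then for all real s, u, t the iterated integrals satisfy Chen's identity: Γⁿ_{ts}(i₁,…,iₙ) = Σ_{k=0}^{n} Γ^k_{tu}(i₁,…,i_k) · Γ^{n−k}_{us}(i_{k+1},…,iₙ), where the k = 0 and k = n terms use Γ⁰ := 1. -/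
open MeasureTheory intervalIntegral

/-- Iterated integrals of a path `Γ : ℝ → ℝ^d`:
`iter Γ 0 i s t = 1` and
`iter Γ (n+1) i s t = ∫_s^t Γ'_{i 0}(u) · iter Γ n (tail of i) s u du`,
so that `iter Γ n i s t` is `Γⁿ_{ts}(i₁,…,iₙ)` with word `i₁ = i 0, …, iₙ = i (n-1)`. -/
noncomputable def iter {d : ℕ} (Γ : ℝ → Fin d → ℝ) : ℕ → (ℕ → Fin d) → ℝ → ℝ → ℝ
  | 0, _, _, _ => 1
  | n + 1, i, s, t =>
      ∫ u in s..t, deriv (fun v => Γ v (i 0)) u * iter Γ n (fun k => i (k + 1)) s u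

lemma iter_continuous {d : ℕ} (Γ : ℝ → Fin d → ℝ)
    (hΓ : ∀ l : Fin d, ContDiff ℝ 1 (fun v => Γ v l)) :
    ∀ (n : ℕ) (i : ℕ → Fin d) (s : ℝ), Continuous (iter Γ n i s)
  | 0, _, _ => continuous_const
  | n + 1, i, s => by
      have h : Continuous fun r =>
          deriv (fun v => Γ v (i 0)) r * iter Γ n (fun k => i (k + 1)) s r :=
        ((hΓ (i 0)).continuous_deriv le_rfl).mul (iter_continuous Γ hΓ n _ s)
      exact intervalIntegral.continuous_primitive (fun a b => h.intervalIntegrable a b) s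

/-- Chen's identity for iterated integrals of a C¹ path:
`Γⁿ_{ts}(i₁,…,iₙ) = Σ_{k=0}^{n} Γᵏ_{tu}(i₁,…,i_k) · Γ^{n−k}_{us}(i_{k+1},…,iₙ)`. -/
theorem chen_identity {d : ℕ} (Γ : ℝ → Fin d → ℝ)
    (hΓ : ∀ l : Fin d, ContDiff ℝ 1 (fun v => Γ v l))
    (n : ℕ) (hn : 1 ≤ n) (i : ℕ → Fin d) (s u t : ℝ) :
    iter Γ n i s t =
      ∑ k ∈ Finset.range (n + 1),
        iter Γ k i u t * iter Γ (n - k) (fun j => i (j + k)) s u := by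
  clear hn
  induction n generalizing i t with
  | zero => simp [iter]
  | succ n ih =>
    set f : ℝ → ℝ := fun r => deriv (fun v => Γ v (i 0)) r with hfdef
    have hf : Continuous f := (hΓ (i 0)).continuous_deriv le_rfl
    have hcont : Continuous fun r => f r * iter Γ n (fun k => i (k + 1)) s r :=
      hf.mul (iter_continuous Γ hΓ n _ s)
    have hsplit : iter Γ (n + 1) i s t =
        iter Γ (n + 1) i s u + ∫ r in u..t, f r * iter Γ n (fun k => i (k + 1)) s r := by
      show (∫ r in s..t, f r * iter Γ n (fun k => i (k + 1)) s r) = _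
      rw [← intervalIntegral.integral_add_adjacent_intervals
        (hcont.intervalIntegrable s u) (hcont.intervalIntegrable u t)]
      rfl
    have hmid : (∫ r in u..t, f r * iter Γ n (fun k => i (k + 1)) s r) =
        ∑ j ∈ Finset.range (n + 1),
          iter Γ (j + 1) i u t *
            iter Γ (n - j) (fun m => i (m + (j + 1))) s u := by
      have : (∫ r in u..t, f r * iter Γ n (fun k => i (k + 1)) s r) =
          ∫ r in u..t, ∑ j ∈ Finset.range (n + 1),
            (f r * iter Γ j (fun k => i (k + 1)) u r) *
              iter Γ (n - j) (fun m => i (m + (j + 1))) s u := by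
        apply intervalIntegral.integral_congr
        intro r _
        dsimp only
        rw [ih (fun k => i (k + 1)) r]
        rw [Finset.mul_sum]
        refine Finset.sum_congr rfl fun j _ => by rw [mul_assoc]; rfl
      rw [this, intervalIntegral.integral_finset_sum]
      · refine Finset.sum_congr rfl fun j _ => ?_
        rw [intervalIntegral.integral_mul_const]
        rfl
      · intro j _
        exact ((hf.mul (iter_continuous Γ hΓ j _ u)).mul
          continuous_const).intervalIntegrable u t
    rw [hsplit, hmid]
    have h0 : iter Γ 0 i u t * iter Γ (n + 1 - 0) (fun j => i (j + 0)) s u =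
        iter Γ (n + 1) i s u := by
      simp only [iter, Nat.sub_zero, Nat.add_zero, one_mul]
    conv_rhs => rw [Finset.sum_range_succ']
    rw [h0, add_comm]
    congr 1
    exact Finset.sum_congr rfl fun k _ => by rw [Nat.succ_sub_succ]
end

section
/- Let Γ : ℝ → ℝ^d be continuously differentiable, n₁, n₂ ≥ 1, and let i = (i₁,…,i_{n₁}), j = (j₁,…,j_{n₂}) be words with letters in {1,…,d}. Then for all real s, t the shuffle identity holds: Γ^{n₁}_{ts}(i₁,…,i_{n₁}) · Γ^{n₂}_{ts}(j₁,…,j_{n₂}) = Σ_{k ∈ Sh(i,j)} Γ^{n₁+n₂}_{ts}(k₁,…,k_{n₁+n₂}), where Sh(i,j) is the set of words of length n₁+n₂ obtained by interleaving i and j, i.e. indexed by the subsets S ⊆ {1,…,n₁+n₂} of cardinality n₁, with the letters of i placed in order at the positions of S and the letters of j placed in order at the complementary positions. -/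
open MeasureTheory intervalIntegral

/-- The word obtained by interleaving the word `i` (placed, in order, at the positions
belonging to `S`) with the word `j` (placed, in order, at the complementary positions). -/
def shuffleWord {d : ℕ} (i j : ℕ → Fin d) (S : Finset ℕ) : ℕ → Fin d :=
  fun p => if p ∈ S then i ((Finset.range p).filter (· ∈ S)).card
           else j ((Finset.range p).filter (· ∉ S)).card

/-! Both sides vanish at `t = s`, so it suffices to compare their derivatives in `t`. By the
product rule the left side has derivative
`Γ'_{i₁} · Γ^{n₁-1}(i₂…) Γ^{n₂}(j) + Γ'_{j₁} · Γ^{n₁}(i) Γ^{n₂-1}(j₂…)`,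
and each product is a sum over shuffles by induction. Differentiating the right side strips
the first letter of each shuffle, which is `i₁` or `j₁` according as `0 ∈ S` or not; sorting
the shuffles by this first letter produces exactly the same two sums. -/

open Finset

theorem eq_of_hasDerivAt_of_eq {𝕜 G : Type*} [RCLike 𝕜] [NormedAddCommGroup G]
    [NormedSpace 𝕜 G] {f g f' : 𝕜 → G} (hf : ∀ x, HasDerivAt f (f' x) x)
    (hg : ∀ x, HasDerivAt g (f' x) x) {a : 𝕜} (ha : f a = g a) (b : 𝕜) : f b = g b :=
  isOpen_univ.eqOn_of_deriv_eq isPreconnected_univ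
    (fun x _ => (hf x).differentiableAt.differentiableWithinAt)
    (fun x _ => (hg x).differentiableAt.differentiableWithinAt)
    (fun x _ => (hf x).deriv.trans (hg x).deriv.symm) (Set.mem_univ a) ha (Set.mem_univ b)

theorem sum_powersetCard_succ_range_succ {M : Type*} [AddCommMonoid M] (f : Finset ℕ → M)
    (k N : ℕ) :
    ∑ S ∈ powersetCard (k + 1) (range (N + 1)), f S =
      ∑ T ∈ powersetCard k (range N), f (insert 0 (T.map (addRightEmbedding 1))) +
      ∑ T ∈ powersetCard (k + 1) (range N), f (T.map (addRightEmbedding 1)) := by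
  have hrange : range (N + 1) = insert 0 ((range N).map (addRightEmbedding 1)) :=
    range_add_one' N
  have h0 : 0 ∉ (range N).map (addRightEmbedding 1) := by simp
  have hnot0 : ∀ A ∈ powersetCard k ((range N).map (addRightEmbedding 1)), 0 ∉ A :=
    fun A hA h => h0 ((mem_powersetCard.1 hA).1 h)
  rw [hrange, powersetCard_succ_insert h0, sum_union, sum_image, powersetCard_map,
    powersetCard_map, sum_map, sum_map, add_comm]
  · rfl
  · intro A hA B hB hAB
    rw [← erase_insert (hnot0 A hA), hAB, erase_insert (hnot0 B hB)]
  · refine disjoint_left.2 fun A hA hA' => ?_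
    obtain ⟨B, -, rfl⟩ := mem_image.1 hA'
    exact h0 ((mem_powersetCard.1 hA).1 (mem_insert_self 0 B))

section Shuffles

variable {d : ℕ} (i j : ℕ → Fin d)

theorem shuffleWord_empty : shuffleWord i j ∅ = j := by
  ext p
  simp [shuffleWord]

theorem shuffleWord_range_of_lt {n p : ℕ} (hp : p < n) : shuffleWord i j (range n) p = i p := by
  have hsub : ∀ x ∈ range p, x < n := fun x hx => (mem_range.1 hx).trans hp
  simp [shuffleWord, hp, filter_true_of_mem hsub]

variable (T : Finset ℕ)

theorem shuffleWord_insert_zero_zero :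
    shuffleWord i j (insert 0 (T.map (addRightEmbedding 1))) 0 = i 0 := by
  simp [shuffleWord]

theorem shuffleWord_insert_zero_succ (p : ℕ) :
    shuffleWord i j (insert 0 (T.map (addRightEmbedding 1))) (p + 1) =
      shuffleWord (fun k => i (k + 1)) j T p := by
  simp only [shuffleWord, ← Nat.count_eq_card_filter_range, Nat.count_succ']
  simp

theorem shuffleWord_map_succ_zero : shuffleWord i j (T.map (addRightEmbedding 1)) 0 = j 0 := by
  simp [shuffleWord]

theorem shuffleWord_map_succ_succ (p : ℕ) :
    shuffleWord i j (T.map (addRightEmbedding 1)) (p + 1) =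
      shuffleWord i (fun k => j (k + 1)) T p := by
  simp only [shuffleWord, ← Nat.count_eq_card_filter_range, Nat.count_succ']
  simp

end Shuffles

section IteratedIntegrals

variable {d : ℕ} {Γ : ℝ → Fin d → ℝ}

theorem iter_congr {n : ℕ} {i i' : ℕ → Fin d} (h : ∀ k < n, i k = i' k) (s t : ℝ) :
    iter Γ n i s t = iter Γ n i' s t := by
  induction n generalizing i i' t with
  | zero => rfl
  | succ n ih => simp only [iter, h 0 n.succ_pos, ih fun k hk => h (k + 1) (by omega)]

theorem iter_succ_self (n : ℕ) (i : ℕ → Fin d) (s : ℝ) : iter Γ (n + 1) i s s = 0 := by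
  simp [iter]

theorem continuous_iter (hΓ : ∀ l, ContDiff ℝ 1 fun v => Γ v l) (n : ℕ) (i : ℕ → Fin d)
    (s : ℝ) : Continuous (iter Γ n i s) := by
  induction n generalizing i with
  | zero => exact continuous_const
  | succ n ih =>
    exact continuous_primitive
      (fun a b => (((hΓ (i 0)).continuous_deriv le_rfl).mul (ih _)).intervalIntegrable a b) s

theorem hasDerivAt_iter (hΓ : ∀ l, ContDiff ℝ 1 fun v => Γ v l) (n : ℕ) (i : ℕ → Fin d)
    (s t : ℝ) :
    HasDerivAt (iter Γ (n + 1) i s)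
      (deriv (fun v => Γ v (i 0)) t * iter Γ n (fun k => i (k + 1)) s t) t :=
  (((hΓ (i 0)).continuous_deriv le_rfl).mul
    (continuous_iter hΓ n _ s)).integral_hasStrictDerivAt s t |>.hasDerivAt

theorem hasDerivAt_sum_iter_shuffleWord (hΓ : ∀ l, ContDiff ℝ 1 fun v => Γ v l) (k N : ℕ)
    (i j : ℕ → Fin d) (s u : ℝ) :
    HasDerivAt
      (fun t => ∑ S ∈ powersetCard (k + 1) (range (N + 1)),
        iter Γ (N + 1) (shuffleWord i j S) s t)
      (deriv (fun v => Γ v (i 0)) u *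
          ∑ T ∈ powersetCard k (range N), iter Γ N (shuffleWord (fun p => i (p + 1)) j T) s u +
        deriv (fun v => Γ v (j 0)) u *
          ∑ T ∈ powersetCard (k + 1) (range N),
            iter Γ N (shuffleWord i (fun p => j (p + 1)) T) s u) u := by
  refine (HasDerivAt.fun_sum fun S _ =>
    hasDerivAt_iter hΓ N (shuffleWord i j S) s u).congr_deriv ?_
  rw [sum_powersetCard_succ_range_succ, mul_sum, mul_sum]
  simp only [shuffleWord_insert_zero_zero, shuffleWord_map_succ_zero,
    shuffleWord_insert_zero_succ, shuffleWord_map_succ_succ]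

end IteratedIntegrals

theorem shuffle_identity_general {d : ℕ} (Γ : ℝ → Fin d → ℝ)
    (hΓ : ∀ l : Fin d, ContDiff ℝ 1 (fun v => Γ v l))
    (n₁ n₂ : ℕ) (i j : ℕ → Fin d) (s t : ℝ) :
    iter Γ n₁ i s t * iter Γ n₂ j s t =
      ∑ S ∈ Finset.powersetCard n₁ (Finset.range (n₁ + n₂)),
        iter Γ (n₁ + n₂) (shuffleWord i j S) s t := by
  induction n₁ generalizing n₂ i j t with
  | zero => simp [iter, shuffleWord_empty]
  | succ a iha =>
    induction n₂ generalizing j t with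
    | zero =>
      have hsingle := powersetCard_self (range (a + 1))
      rw [card_range] at hsingle
      rw [add_zero, hsingle, sum_singleton]
      exact (mul_one _).trans (iter_congr (fun k hk => (shuffleWord_range_of_lt i j hk).symm) s t)
    | succ b ihb =>
      have hi := iha (b + 1) (fun p => i (p + 1)) j
      have hj := ihb (fun p => j (p + 1))
      rw [← add_assoc] at hi
      rw [add_right_comm] at hj
      rw [show a + 1 + (b + 1) = a + b + 1 + 1 by omega]
      refine eq_of_hasDerivAt_of_eq
        (fun u => (hasDerivAt_iter hΓ a i s u).fun_mul (hasDerivAt_iter hΓ b j s u))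
        (fun u => (hasDerivAt_sum_iter_shuffleWord hΓ a (a + b + 1) i j s u).congr_deriv ?_)
        (a := s) ?_ t
      · rw [← hi, ← hj]
        ring
      · simp only [iter_succ_self, zero_mul, sum_const_zero]

/-- Shuffle identity for iterated integrals of a C¹ path:
`Γ^{n₁}_{ts}(i) · Γ^{n₂}_{ts}(j) = Σ_{k ∈ Sh(i,j)} Γ^{n₁+n₂}_{ts}(k)`,
the shuffles being indexed by the subsets `S ⊆ {0,…,n₁+n₂−1}` of cardinality `n₁`. -/
theorem shuffle_identity {d : ℕ} (Γ : ℝ → Fin d → ℝ)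
    (hΓ : ∀ l : Fin d, ContDiff ℝ 1 (fun v => Γ v l))
    (n₁ n₂ : ℕ) (hn₁ : 1 ≤ n₁) (hn₂ : 1 ≤ n₂) (i j : ℕ → Fin d) (s t : ℝ) :
    iter Γ n₁ i s t * iter Γ n₂ j s t =
      ∑ S ∈ Finset.powersetCard n₁ (Finset.range (n₁ + n₂)),
        iter Γ (n₁ + n₂) (shuffleWord i j S) s t :=
  shuffle_identity_general Γ hΓ n₁ n₂ i j s t
end

section
/- Let Γ = (Γ₁, Γ₂) : ℝ → ℝ² be continuously differentiable. Define on ℝ³ the Heisenberg group product (x₁,y₁,z₁)·(x₂,y₂,z₂) := (x₁+x₂, y₁+y₂, z₁+z₂+½(x₂y₁ − x₁y₂)), and the lifted path g(t) := (Γ₁(t) − Γ₁(0), Γ₂(t) − Γ₂(0), ½·LA(0,t)). Then for all real s, t one has g(s) · (Γ₁(t) − Γ₁(s), Γ₂(t) − Γ₂(s), ½·LA(s,t)) = g(t); in other words, the defect of additivity of the Lévy area is encoded by the non-commutativity of the Heisenberg group product. -/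
open MeasureTheory intervalIntegral

/-- The Lévy area of a C¹ path `(Γ₁, Γ₂)` between times `s` and `t`. -/
noncomputable def levyArea (Γ₁ Γ₂ : ℝ → ℝ) (s t : ℝ) : ℝ :=
  (∫ u in s..t, deriv Γ₁ u * (Γ₂ u - Γ₂ s)) -
    (∫ u in s..t, deriv Γ₂ u * (Γ₁ u - Γ₁ s))

/-- The Heisenberg group product on ℝ³ in exponential coordinates:
`(x₁,y₁,z₁)·(x₂,y₂,z₂) = (x₁+x₂, y₁+y₂, z₁+z₂+½(x₂y₁ − x₁y₂))`. -/
noncomputable def heisMul (a b : ℝ × ℝ × ℝ) : ℝ × ℝ × ℝ :=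
  (a.1 + b.1, a.2.1 + b.2.1, a.2.2 + b.2.2 + (b.1 * a.2.1 - a.1 * b.2.1) / 2)

/-- The lifted path `g(t) = (Γ₁(t) − Γ₁(0), Γ₂(t) − Γ₂(0), ½·LA(0,t))`. -/
noncomputable def heisLift (Γ₁ Γ₂ : ℝ → ℝ) (t : ℝ) : ℝ × ℝ × ℝ :=
  (Γ₁ t - Γ₁ 0, Γ₂ t - Γ₂ 0, levyArea Γ₁ Γ₂ 0 t / 2)

/-! Both components of the Lévy area are iterated integrals `∫ₛᵗ (g u - g s) df(u)`, which satisfy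
Chen's identity: splitting `[a, c]` at `b` costs the cross term `(g b - g a)(f c - f b)`. The
antisymmetric part of these cross terms is exactly the correction term of the Heisenberg product. -/

noncomputable def iteratedIntegral (f g : ℝ → ℝ) (s t : ℝ) : ℝ :=
  ∫ u in s..t, deriv f u * (g u - g s)

theorem iteratedIntegral_add_adjacent {f g : ℝ → ℝ} (hf : ContDiff ℝ 1 f) (hg : Continuous g)
    (a b c : ℝ) :
    iteratedIntegral f g a c =
      iteratedIntegral f g a b + iteratedIntegral f g b c + (g b - g a) * (f c - f b) := by
  have hf' : Continuous (deriv f) := hf.continuous_deriv le_rfl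
  have hint : ∀ x y z, IntervalIntegrable (fun u => deriv f u * (g u - g z)) volume x y :=
    fun x y z => (hf'.mul (hg.sub continuous_const)).intervalIntegrable x y
  have hftc : ∫ u in b..c, deriv f u = f c - f b :=
    integral_deriv_eq_sub (fun x _ => (hf.differentiable one_ne_zero).differentiableAt)
      (hf'.intervalIntegrable b c)
  have hrebase : ∫ u in b..c, deriv f u * (g u - g a) =
      iteratedIntegral f g b c + (g b - g a) * (f c - f b) := by
    calc ∫ u in b..c, deriv f u * (g u - g a)
        = ∫ u in b..c, (deriv f u * (g u - g b) + (g b - g a) * deriv f u) :=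
          integral_congr fun u _ => by ring
      _ = iteratedIntegral f g b c + (g b - g a) * (f c - f b) := by
          rw [integral_add (hint b c b) ((hf'.intervalIntegrable b c).const_mul _),
            intervalIntegral.integral_const_mul, hftc, iteratedIntegral]
  rw [iteratedIntegral, ← integral_add_adjacent_intervals (hint a b a) (hint b c a), hrebase,
    ← add_assoc]
  rfl

theorem levyArea_eq_sub (Γ₁ Γ₂ : ℝ → ℝ) (s t : ℝ) :
    levyArea Γ₁ Γ₂ s t = iteratedIntegral Γ₁ Γ₂ s t - iteratedIntegral Γ₂ Γ₁ s t := rfl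

theorem levyArea_add_adjacent {Γ₁ Γ₂ : ℝ → ℝ} (h₁ : ContDiff ℝ 1 Γ₁) (h₂ : ContDiff ℝ 1 Γ₂)
    (a b c : ℝ) :
    levyArea Γ₁ Γ₂ a c = levyArea Γ₁ Γ₂ a b + levyArea Γ₁ Γ₂ b c +
      ((Γ₂ b - Γ₂ a) * (Γ₁ c - Γ₁ b) - (Γ₁ b - Γ₁ a) * (Γ₂ c - Γ₂ b)) := by
  simp only [levyArea_eq_sub, iteratedIntegral_add_adjacent h₁ h₂.continuous a b c,
    iteratedIntegral_add_adjacent h₂ h₁.continuous a b c]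
  ring

/-- The defect of additivity of the Lévy area is encoded by the Heisenberg group product:
`g(s) · (Γ₁(t) − Γ₁(s), Γ₂(t) − Γ₂(s), ½·LA(s,t)) = g(t)`. -/
theorem levyArea_heisenberg (Γ₁ Γ₂ : ℝ → ℝ)
    (h₁ : ContDiff ℝ 1 Γ₁) (h₂ : ContDiff ℝ 1 Γ₂) (s t : ℝ) :
    heisMul (heisLift Γ₁ Γ₂ s)
        (Γ₁ t - Γ₁ s, Γ₂ t - Γ₂ s, levyArea Γ₁ Γ₂ s t / 2)
      = heisLift Γ₁ Γ₂ t := by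
  simp only [heisMul, heisLift, levyArea_add_adjacent h₁ h₂ 0 s t, Prod.mk.injEq]
  exact ⟨by ring, by ring, by ring⟩
end

section
/- (Divergence of the bubble diagram.) Let α ∈ (0, 1/4) and let ξ ∈ ℝ, ξ ≠ 0. Then the limit as Λ → ∞ of Λ^{4α−1} · ∫_{{ξ₁ : |ξ₁| ≤ Λ, |ξ₁| < |ξ − ξ₁|}} |ξ₁|^{1−2α} |ξ − ξ₁|^{−1−2α} dξ₁ exists and equals 1/(1 − 4α). In particular, the bubble integral ∫_{|ξ₁| < |ξ−ξ₁|}^{|ξ₁| ≤ Λ} |ξ₁|^{1−2α}|ξ−ξ₁|^{−1−2α} dξ₁ diverges like Λ^{1−4α} as the ultra-violet cut-off Λ tends to infinity, at a rate independent of the external momentum ξ. -/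
/-!
Write `I(ξ, Λ)` for the bubble integral. Substituting `ξ₁ = Λ u` (the integrand is
homogeneous of degree `-4α`) turns `Λ^{4α-1} · I(ξ, Λ)` into `I(ξ/Λ, 1)`. For `ε = ξ/Λ > 0`
the constraint `|u| < |ε - u|` reads `2u < ε`, so as `ε → 0⁺` the domain shrinks to `[-1, 0]`,
while `|ε - u| > |u|` dominates the integrand by `|u|^{-4α}`, integrable since `α < 1/4`.
Dominated convergence then gives `∫_{-1}^0 |u|^{-4α} du = 1/(1-4α)`; the case `ξ < 0` follows
by the reflection `ξ₁ ↦ -ξ₁`.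
-/

open MeasureTheory Filter Set Topology
open scoped Pointwise

def bubbleDomain (ξ Λ : ℝ) : Set ℝ := {x | |x| ≤ Λ ∧ |x| < |ξ - x|}

noncomputable def bubbleIntegrand (a b ξ x : ℝ) : ℝ := |x| ^ a * |ξ - x| ^ b

noncomputable def bubbleIntegral (a b ξ Λ : ℝ) : ℝ :=
  ∫ x in bubbleDomain ξ Λ, bubbleIntegrand a b ξ x

lemma measurableSet_bubbleDomain (ξ Λ : ℝ) : MeasurableSet (bubbleDomain ξ Λ) :=
  (measurableSet_le measurable_abs measurable_const).inter
    (measurableSet_lt measurable_abs (measurable_const.sub measurable_id).abs)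

lemma measurable_bubbleIntegrand (a b ξ : ℝ) : Measurable (bubbleIntegrand a b ξ) := by
  unfold bubbleIntegrand; fun_prop

lemma bubbleIntegral_neg (a b ξ Λ : ℝ) : bubbleIntegral a b (-ξ) Λ = bubbleIntegral a b ξ Λ := by
  have hreflect := (Measure.measurePreserving_neg (volume : Measure ℝ)).setIntegral_preimage_emb
    (Homeomorph.neg ℝ).measurableEmbedding (bubbleIntegrand a b ξ) (bubbleDomain ξ Λ)
  have hsub : ∀ x : ℝ, |ξ + x| = |-ξ - x| := fun x => by rw [← abs_neg, neg_add']
  simpa [bubbleIntegral, bubbleIntegrand, bubbleDomain, hsub] using hreflect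

lemma bubbleIntegral_mul_mul (a b ξ Λ : ℝ) {c : ℝ} (hc : 0 < c) :
    bubbleIntegral a b (c * ξ) (c * Λ) = c ^ (a + b + 1) * bubbleIntegral a b ξ Λ := by
  have hmem : ∀ y, c * y ∈ bubbleDomain (c * ξ) (c * Λ) ↔ y ∈ bubbleDomain ξ Λ := fun y => by
    simp only [bubbleDomain, mem_ofPred_eq, ← mul_sub, abs_mul, abs_of_pos hc,
      mul_le_mul_iff_right₀ hc, mul_lt_mul_iff_right₀ hc]
  have hdom : c • bubbleDomain ξ Λ = bubbleDomain (c * ξ) (c * Λ) := by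
    ext x
    rw [mem_smul_set_iff_inv_smul_mem₀ hc.ne', smul_eq_mul, ← hmem, mul_inv_cancel_left₀ hc.ne']
  have hint : ∀ y, bubbleIntegrand a b (c * ξ) (c * y) = c ^ (a + b) * bubbleIntegrand a b ξ y :=
    fun y => by
      simp only [bubbleIntegrand, ← mul_sub, abs_mul, abs_of_pos hc,
        Real.mul_rpow hc.le (abs_nonneg _), Real.rpow_add hc]
      ring
  have hchange := Measure.setIntegral_comp_smul_of_pos volume (bubbleIntegrand a b (c * ξ))
    (bubbleDomain ξ Λ) hc
  simp only [hint, hdom, integral_const_mul, Module.finrank_self, pow_one, smul_eq_mul] at hchange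
  rw [bubbleIntegral, bubbleIntegral, Real.rpow_add_one hc.ne', mul_right_comm, hchange]
  field_simp

lemma abs_lt_abs_sub_iff {ε u : ℝ} (hε : 0 < ε) : |u| < |ε - u| ↔ 2 * u < ε := by
  rw [← sq_lt_sq]
  constructor <;> intro h <;> nlinarith

lemma integral_Icc_neg_one_zero_abs_rpow {c : ℝ} (hc : -1 < c) :
    ∫ u in Icc (-1) 0, |u| ^ c = 1 / (c + 1) := by
  rw [integral_Icc_eq_integral_Ioc, ← intervalIntegral.integral_of_le (by norm_num)]
  calc ∫ u in (-1)..0, |u| ^ c = ∫ u in (-1)..0, |-u| ^ c := by simp_rw [abs_neg]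
    _ = ∫ u in (0 : ℝ)..1, |u| ^ c := by
          rw [intervalIntegral.integral_comp_neg fun u => |u| ^ c, neg_zero, neg_neg]
    _ = ∫ u in (0 : ℝ)..1, u ^ c := intervalIntegral.integral_congr fun u hu => by
          rw [abs_of_nonneg (by simpa using hu.1 : (0 : ℝ) ≤ u)]
    _ = 1 / (c + 1) := by
          rw [integral_rpow (Or.inl hc), Real.one_rpow, Real.zero_rpow (by linarith), sub_zero]

lemma intervalIntegrable_abs_rpow {c : ℝ} (hc : -1 < c) (r s : ℝ) :
    IntervalIntegrable (fun u : ℝ => |u| ^ c) volume r s := by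
  refine intervalIntegrable_of_even (fun u => by rw [abs_neg]) fun t ht => ?_
  refine (intervalIntegral.intervalIntegrable_rpow' hc).congr_uIoo fun u hu => ?_
  rw [uIoo_of_le ht.le] at hu
  exact (congrArg (· ^ c) (abs_of_pos hu.1)).symm

lemma tendsto_indicator_bubbleDomain (a b : ℝ) {u : ℝ} (hu : u ≠ 0) :
    Tendsto (fun ε => (bubbleDomain ε 1).indicator (bubbleIntegrand a b ε) u) (𝓝[>] 0)
      (𝓝 ((Icc (-1) 0).indicator (fun x => |x| ^ (a + b)) u)) := by
  by_cases hu' : u ∈ Icc (-1) 0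
  · have hneg : u < 0 := lt_of_le_of_ne hu'.2 hu
    have hmem : ∀ᶠ ε in 𝓝[>] 0, u ∈ bubbleDomain ε 1 := by
      filter_upwards [self_mem_nhdsWithin] with ε hε
      exact ⟨abs_le.2 ⟨hu'.1, by linarith⟩, (abs_lt_abs_sub_iff hε).2 (by linarith [mem_Ioi.1 hε])⟩
    have hcont : ContinuousAt (fun ε => bubbleIntegrand a b ε u) 0 := by
      unfold bubbleIntegrand
      exact continuousAt_const.mul ((continuous_id.sub continuous_const).abs.continuousAt.rpow_const
        (Or.inl (by simpa using hu)))
    rw [indicator_of_mem hu']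
    have hlim := (hcont.tendsto.mono_left nhdsWithin_le_nhds).congr'
      (hmem.mono fun ε hε => (indicator_of_mem hε _).symm)
    simpa [bubbleIntegrand, ← Real.rpow_add (abs_pos.2 hu)] using hlim
  · rw [indicator_of_notMem hu']
    refine tendsto_const_nhds.congr' ?_
    filter_upwards [Ioo_mem_nhdsGT (by positivity : (0 : ℝ) < 2 * |u|)] with ε hε
    refine (indicator_of_notMem (fun hmem => hu' ?_) _).symm
    obtain ⟨hle, hlt⟩ := hmem
    have hneg : u < 0 := by
      rcases abs_cases u with ⟨habs, _⟩ | ⟨_, h⟩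
      · linarith [(abs_lt_abs_sub_iff hε.1).1 hlt, hε.2]
      · exact h
    exact ⟨(abs_le.1 hle).1, hneg.le⟩

lemma norm_indicator_bubbleIntegrand_le (a : ℝ) {b : ℝ} (hb : b ≤ 0) (ε : ℝ) {u : ℝ}
    (hu : u ≠ 0) :
    ‖(bubbleDomain ε 1).indicator (bubbleIntegrand a b ε) u‖ ≤
      (Icc (-1) 1).indicator (fun x => |x| ^ (a + b)) u := by
  by_cases hmem : u ∈ bubbleDomain ε 1
  · rw [indicator_of_mem hmem, indicator_of_mem (mem_Icc.2 (abs_le.1 hmem.1)), Real.norm_eq_abs,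
      bubbleIntegrand, abs_of_nonneg (by positivity), Real.rpow_add (abs_pos.2 hu)]
    exact mul_le_mul_of_nonneg_left (Real.rpow_le_rpow_of_nonpos (abs_pos.2 hu) hmem.2.le hb)
      (by positivity)
  · rw [indicator_of_notMem hmem, norm_zero]
    exact indicator_nonneg (fun x _ => by positivity) u

theorem tendsto_bubbleIntegral_one_nhdsGT {a b : ℝ} (hb : b ≤ 0) (hab : -1 < a + b) :
    Tendsto (fun ε => bubbleIntegral a b ε 1) (𝓝[>] 0) (𝓝 (1 / (a + b + 1))) := by
  have hae : ∀ᵐ u : ℝ, u ≠ 0 := Measure.ae_ne volume 0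
  rw [← integral_Icc_neg_one_zero_abs_rpow hab, ← integral_indicator measurableSet_Icc]
  simp_rw [bubbleIntegral, ← integral_indicator (measurableSet_bubbleDomain _ _)]
  refine tendsto_integral_filter_of_dominated_convergence _
    (Eventually.of_forall fun ε => ((measurable_bubbleIntegrand a b ε).indicator
      (measurableSet_bubbleDomain ε 1)).aestronglyMeasurable)
    (Eventually.of_forall fun ε => hae.mono fun u hu => norm_indicator_bubbleIntegrand_le a hb ε hu)
    ?_ (hae.mono fun u hu => tendsto_indicator_bubbleDomain a b hu)
  rw [integrable_indicator_iff measurableSet_Icc]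
  exact (intervalIntegrable_iff_integrableOn_Icc_of_le (by norm_num)).1
    (intervalIntegrable_abs_rpow hab (-1) 1)

/-- Divergence of the bubble diagram: for `α ∈ (0, 1/4)` and external momentum `ξ ≠ 0`,
`Λ^{4α−1} ∫_{|ξ₁| ≤ Λ, |ξ₁| < |ξ−ξ₁|} |ξ₁|^{1−2α} |ξ−ξ₁|^{−1−2α} dξ₁ → 1/(1−4α)`
as the ultra-violet cut-off `Λ → ∞`; in particular the bubble integral diverges like
`Λ^{1−4α}` at a rate independent of `ξ`. -/
theorem bubble_divergence (α : ℝ) (hα : α ∈ Set.Ioo (0:ℝ) (1/4)) (ξ : ℝ) (hξ : ξ ≠ 0) :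
    Tendsto
      (fun Λ : ℝ => Λ ^ (4 * α - 1) *
        ∫ ξ₁ in {x : ℝ | |x| ≤ Λ ∧ |x| < |ξ - x|},
          |ξ₁| ^ (1 - 2 * α) * |ξ - ξ₁| ^ (-1 - 2 * α))
      atTop (nhds (1 / (1 - 4 * α))) := by
  obtain ⟨hα0, hα4⟩ := hα
  change Tendsto (fun Λ => Λ ^ (4 * α - 1) * bubbleIntegral (1 - 2 * α) (-1 - 2 * α) ξ Λ) atTop _
  wlog hξ_pos : 0 < ξ generalizing ξ
  · simpa only [bubbleIntegral_neg] using
      this (-ξ) (neg_ne_zero.2 hξ) (neg_pos.2 (lt_of_le_of_ne (not_lt.1 hξ_pos) hξ))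
  have hexp : 1 - 2 * α + (-1 - 2 * α) + 1 = 1 - 4 * α := by ring
  have hξΛ : Tendsto (fun Λ => ξ / Λ) atTop (𝓝[>] 0) := tendsto_nhdsWithin_iff.2
    ⟨tendsto_const_nhds.div_atTop tendsto_id,
      (eventually_gt_atTop 0).mono fun Λ hΛ => div_pos hξ_pos hΛ⟩
  have hlim := (tendsto_bubbleIntegral_one_nhdsGT (a := 1 - 2 * α) (b := -1 - 2 * α)
    (by linarith) (by linarith)).comp hξΛ
  rw [hexp] at hlim
  refine hlim.congr' ((eventually_gt_atTop 0).mono fun Λ hΛ => ?_)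
  have hscale := bubbleIntegral_mul_mul (1 - 2 * α) (-1 - 2 * α) (ξ / Λ) 1 hΛ
  rw [mul_div_cancel₀ _ hΛ.ne', mul_one, hexp] at hscale
  dsimp only [Function.comp_apply]
  rw [hscale, ← mul_assoc, ← Real.rpow_add hΛ,
    show 4 * α - 1 + (1 - 4 * α) = 0 by ring, Real.rpow_zero, one_mul]
end
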